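/- Let KB be a consistent SCKB and let E_KB be the epistemic interpretation constructed from the minimum ranked model R of KB^∧ and the minimum ranked model R' of KB^∧_{∞↓}. Then E_KB is the unique minimal epistemic model of KB with respect to the pointwise ordering ≼ on epistemic interpretations: E_KB is an epistemic model of KB, no epistemic model E' of KB satisfies E' ≺ E_KB (i.e., E' ≼ E_KB and E' ≠ E_KB, so that E' is pointwise ≤ E_KB everywhere and strictly below it at some world), and every minimal epistemic model of KB equals E_KB. -/
import Mathlib


open scoped Classical

/-- The set of ranks `Rk`: finite ranks `(f, i)` with `i ∈ ℕ`, and infinite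
ranks `(∞, i)` with `i ∈ ℕ ∪ {∞}`. -/
inductive Rk where
  | fin : ℕ → Rk
  | inf : ℕ∞ → Rk

/-- The total order on ranks: `(f,i) ≤ (f,j)` iff `i ≤ j`; `(∞,i) ≤ (∞,j)` iff
`i ≤ j`; every finite rank is below every infinite rank. -/
def Rk.le : Rk → Rk → Prop
  | .fin i, .fin j => i ≤ j
  | .fin _, .inf _ => True
  | .inf _, .fin _ => False
  | .inf i, .inf j => i ≤ j

variable {W : Type*} [Fintype W] [Nonempty W]

/-- A ranked interpretation: a function `R : W → ℕ∞` satisfying convexity. -/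
def RankedInterp (R : W → ℕ∞) : Prop :=
  ∀ u : W, ∀ i : ℕ, R u = (i : ℕ∞) → ∀ j : ℕ, j < i → ∃ u' : W, R u' = (j : ℕ∞)

/-- The finitely ranked (plausible) worlds of a ranked interpretation. -/
def UfR (R : W → ℕ∞) : Set W := {u | R u ≠ ⊤}

/-- `R` satisfies the defeasible conditional `A |~ B`: every world of `A` of
finite rank whose rank is minimal among finitely ranked worlds of `A` is in `B`. -/
def SatDC (R : W → ℕ∞) (A B : Set W) : Prop :=
  ∀ u ∈ A ∩ UfR R, (∀ v ∈ A ∩ UfR R, R u ≤ R v) → u ∈ B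

/-- An epistemic interpretation: a function `E : W → Rk` satisfying the two-tier
convexity property. -/
def EpiInterp (E : W → Rk) : Prop :=
  (∀ u : W, ∀ i : ℕ, E u = Rk.fin i → ∀ j : ℕ, j < i → ∃ u' : W, E u' = Rk.fin j) ∧
  (∀ u : W, ∀ i : ℕ, E u = Rk.inf (i : ℕ∞) → ∀ j : ℕ, j < i → ∃ u' : W, E u' = Rk.inf (j : ℕ∞))

/-- Plausible worlds of an epistemic interpretation: those with finite rank `(f,i)`. -/
def UfE (E : W → Rk) : Set W := {u | ∃ i : ℕ, E u = Rk.fin i}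

/-- Implausible-but-possible worlds: those with rank `(∞,i)`, `i ∈ ℕ`. -/
def UiE (E : W → Rk) : Set W := {u | ∃ i : ℕ, E u = Rk.inf (i : ℕ∞)}

/-- `E` satisfies the situated conditional `A |~_C B`. -/
def SatSC (E : W → Rk) (A B C : Set W) : Prop :=
  if (C ∩ UfE E).Nonempty then
    ∀ u ∈ A ∩ C ∩ UfE E, (∀ v ∈ A ∩ C ∩ UfE E, (E u).le (E v)) → u ∈ B
  else
    ∀ u ∈ A ∩ C ∩ UiE E, (∀ v ∈ A ∩ C ∩ UiE E, (E u).le (E v)) → u ∈ B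

/-- The conjunctive classical form of an SCKB: `KB^∧ = {(A ∩ C, B) : (A,B,C) ∈ KB}`. -/
def conjForm (KB : Set (Set W × Set W × Set W)) : Set (Set W × Set W) :=
  {p | ∃ A B C : Set W, (A, B, C) ∈ KB ∧ p = (A ∩ C, B)}

/-- `R` is a ranked model of a set of pairs of propositions (defeasible conditionals). -/
def RankedModel (R : W → ℕ∞) (S : Set (Set W × Set W)) : Prop :=
  RankedInterp R ∧ ∀ p ∈ S, SatDC R p.1 p.2

/-- `R` is the minimum ranked model of `S`: a ranked model of `S` that is
pointwise below every other ranked model of `S`. -/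
def MinRankedModel (R : W → ℕ∞) (S : Set (Set W × Set W)) : Prop :=
  RankedModel R S ∧ ∀ R' : W → ℕ∞, RankedModel R' S → ∀ u : W, R u ≤ R' u

/-- `E` is an epistemic model of an SCKB: it is an epistemic interpretation
satisfying every situated conditional `(A, B, C)` in the knowledge base. -/
def EpiModel (E : W → Rk) (KB : Set (Set W × Set W × Set W)) : Prop :=
  EpiInterp E ∧ ∀ t ∈ KB, SatSC E t.1 t.2.1 t.2.2

/-- The conditionals of `KB` whose situation has infinite rank in `R`, in
conjunctive form, together with the conditional `U^f_R |~ ⊥`: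
`KB^∧_{∞↓} = {(A ∩ C, B) : (A,B,C) ∈ KB, C ∩ U^f_R = ∅} ∪ {(U^f_R, ∅)}`. -/
def infForm (KB : Set (Set W × Set W × Set W)) (R : W → ℕ∞) :
    Set (Set W × Set W) :=
  {p | ∃ A B C : Set W, (A, B, C) ∈ KB ∧ C ∩ UfR R = ∅ ∧ p = (A ∩ C, B)} ∪
    {(UfR R, ∅)}

/-- The minimal epistemic model of `KB` built from the minimum ranked model `R`
of `KB^∧` and the minimum ranked model `R'` of `KB^∧_{∞↓}`:
`E_KB(u) = (f, R(u))` if `R(u) ∈ ℕ`, and `E_KB(u) = (∞, R'(u))` if `R(u) = ∞`. -/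
noncomputable def minEpi (R R' : W → ℕ∞) : W → Rk := fun u =>
  if R u = ⊤ then Rk.inf (R' u) else Rk.fin (R u).toNat

/-- Pointwise ordering on epistemic interpretations. -/
def epiLe (E₁ E₂ : W → Rk) : Prop := ∀ u : W, (E₁ u).le (E₂ u)

/-- Strict pointwise ordering. -/
def epiLt (E₁ E₂ : W → Rk) : Prop := epiLe E₁ E₂ ∧ ¬ epiLe E₂ E₁

/-- A minimal epistemic model of `KB`: an epistemic model of `KB` such that no
epistemic model of `KB` is strictly below it. -/
def MinEpiModel (E : W → Rk) (KB : Set (Set W × Set W × Set W)) : Prop :=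
  EpiModel E KB ∧ ¬ ∃ E' : W → Rk, EpiModel E' KB ∧ epiLt E' E

/-! ### Auxiliary lemmas -/

lemma Rk.le_refl' (r : Rk) : r.le r := by cases r <;> simp [Rk.le]

lemma Rk.le_antisymm' {r s : Rk} (h1 : r.le s) (h2 : s.le r) : r = s := by
  cases r <;> cases s <;> simp_all [Rk.le] <;> exact le_antisymm h1 h2

lemma Rk.le_fin_iff {i j : ℕ} : (Rk.fin i).le (Rk.fin j) ↔ i ≤ j := Iff.rfl

lemma Rk.le_inf_iff {a b : ℕ∞} : (Rk.inf a).le (Rk.inf b) ↔ a ≤ b := Iff.rfl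

lemma Rk.fin_le_inf {i : ℕ} {a : ℕ∞} : (Rk.fin i).le (Rk.inf a) := trivial

lemma toNat_le_iff_le {a b : ℕ∞} (ha : a ≠ ⊤) (hb : b ≠ ⊤) :
    a.toNat ≤ b.toNat ↔ a ≤ b := by
  lift a to ℕ using ha with i
  lift b to ℕ using hb with j
  simp

/-- The finite part of an epistemic interpretation, as a ranked function. -/
def finPartE (E : W → Rk) : W → ℕ∞ := fun u =>
  match E u with
  | .fin i => (i : ℕ∞)
  | .inf _ => ⊤

lemma finPartE_fin {E : W → Rk} {u : W} {i : ℕ} (h : E u = Rk.fin i) :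
    finPartE E u = (i : ℕ∞) := by simp [finPartE, h]

lemma finPartE_inf {E : W → Rk} {u : W} {m : ℕ∞} (h : E u = Rk.inf m) :
    finPartE E u = ⊤ := by simp [finPartE, h]

lemma mem_UfR {R : W → ℕ∞} {u : W} : u ∈ UfR R ↔ R u ≠ ⊤ := Iff.rfl

/-- The finite part of an epistemic model of `KB` is a ranked model of `KB^∧`. -/
lemma finPart_model {KB : Set (Set W × Set W × Set W)} (E : W → Rk)
    (hE : EpiModel E KB) : RankedModel (finPartE E) (conjForm KB) := by
  constructor
  · intro u i hi j hj
    rcases hEu : E u with k | m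
    · rw [finPartE_fin hEu] at hi
      have hk : k = i := by exact_mod_cast hi
      subst hk
      obtain ⟨u', hu'⟩ := hE.1.1 u k hEu j hj
      exact ⟨u', finPartE_fin hu'⟩
    · rw [finPartE_inf hEu] at hi
      exact absurd hi.symm (by simp)
  · rintro p ⟨A, B, C, hABC, rfl⟩
    intro u hu hmin
    obtain ⟨huAC, huf⟩ := hu
    obtain ⟨i, hEu⟩ : ∃ i : ℕ, E u = Rk.fin i := by
      rcases hEu : E u with k | m
      · exact ⟨k, rfl⟩
      · exact absurd (finPartE_inf hEu) huf
    have hsat := hE.2 (A, B, C) hABC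
    simp only [SatSC] at hsat
    rw [if_pos ⟨u, huAC.2, i, hEu⟩] at hsat
    apply hsat u ⟨huAC, i, hEu⟩
    intro v hv
    obtain ⟨hvAC, k, hEv⟩ := hv
    have := hmin v ⟨hvAC, by rw [mem_UfR, finPartE_fin hEv]; simp⟩
    rw [finPartE_fin hEu, finPartE_fin hEv] at this
    rw [hEu, hEv, Rk.le_fin_iff]
    exact_mod_cast this

/-- Disjointness forced by the conditional `U^f_R |~ ⊥`. -/
lemma disj_lemma {S : Set (Set W × Set W)} {R R' : W → ℕ∞}
    (hmem : ((UfR R : Set W), (∅ : Set W)) ∈ S) (hR' : RankedModel R' S) :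
    ∀ u : W, R' u ≠ ⊤ → R u = ⊤ := by
  intro u hu
  by_contra hRu
  have hne : (UfR R ∩ UfR R').Nonempty := ⟨u, hRu, hu⟩
  obtain ⟨v, hv, hvmin⟩ := Set.exists_min_image _ R' (Set.toFinite _) hne
  exact Set.notMem_empty v (hR'.2 _ hmem v hv hvmin)

lemma minEpi_fin {R R' : W → ℕ∞} {u : W} (h : R u ≠ ⊤) :
    minEpi R R' u = Rk.fin (R u).toNat := by simp [minEpi, h]

lemma minEpi_inf {R R' : W → ℕ∞} {u : W} (h : R u = ⊤) :
    minEpi R R' u = Rk.inf (R' u) := by simp [minEpi, h]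

lemma mem_ufe_minEpi {R R' : W → ℕ∞} {u : W} :
    u ∈ UfE (minEpi R R') ↔ R u ≠ ⊤ := by
  constructor
  · rintro ⟨i, hi⟩
    intro h
    rw [minEpi_inf h] at hi
    exact Rk.noConfusion hi
  · intro h
    exact ⟨(R u).toNat, minEpi_fin h⟩

lemma mem_uie_minEpi {R R' : W → ℕ∞} {u : W}
    (hdisj : ∀ u : W, R' u ≠ ⊤ → R u = ⊤) :
    u ∈ UiE (minEpi R R') ↔ R' u ≠ ⊤ := by
  constructor
  · rintro ⟨i, hi⟩
    by_cases h : R u = ⊤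
    · rw [minEpi_inf h] at hi
      have : R' u = (i : ℕ∞) := Rk.inf.inj hi
      simp [this]
    · rw [minEpi_fin h] at hi
      exact Rk.noConfusion hi
  · intro h
    have hRu := hdisj u h
    obtain ⟨i, hi⟩ := WithTop.ne_top_iff_exists.1 h
    exact ⟨i, by rw [minEpi_inf hRu]; exact congrArg Rk.inf hi.symm⟩

/-- Key lemma: the infinite ranks of `E_KB` are below those of any epistemic
model, via a rank-compression argument. -/
lemma key_inf {KB : Set (Set W × Set W × Set W)}
    {R R' : W → ℕ∞} {E' : W → Rk}
    (hR : MinRankedModel R (conjForm KB))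
    (hR' : MinRankedModel R' (infForm KB R))
    (hE' : EpiModel E' KB) :
    ∀ u : W, ∀ k : ℕ, R u = ⊤ → E' u = Rk.inf (k : ℕ∞) → R' u ≤ (k : ℕ∞) := by
  classical
  have hRfin : ∀ v : W, R v ≤ finPartE E' v :=
    fun v => hR.2 _ (finPart_model E' hE') v
  set att : ℕ → Prop := fun k => ∃ w : W, R w = ⊤ ∧ E' w = Rk.inf (k : ℕ∞)
    with hatt
  set g : ℕ → ℕ := fun j => ((Finset.range j).filter att).card with hg
  have gmono : ∀ {j k : ℕ}, j ≤ k → g j ≤ g k := fun h =>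
    Finset.card_le_card (Finset.filter_subset_filter _ (Finset.range_subset_range.2 h))
  have gsucc : ∀ j, att j → g (j + 1) = g j + 1 := by
    intro j hj
    simp [hg, Finset.range_add_one, Finset.filter_insert, hj]
  have gstrict : ∀ {k j : ℕ}, att k → k < j → g k < g j := by
    intro k j hk hkj
    calc g k < g (k + 1) := by rw [gsucc k hk]; omega
      _ ≤ g j := gmono hkj
  have gle : ∀ j, g j ≤ j := fun j =>
    le_trans (Finset.card_filter_le _ _) (by simp)
  have gsurj : ∀ j l, l < g j → ∃ k, att k ∧ g k = l := by
    intro j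
    induction j with
    | zero => intro l hl; simp [hg] at hl
    | succ n ih =>
      intro l hl
      by_cases hn : att n
      · rw [gsucc n hn] at hl
        rcases Nat.lt_succ_iff_lt_or_eq.1 hl with h | h
        · exact ih l h
        · exact ⟨n, hn, h.symm⟩
      · have heq : g (n + 1) = g n := by
          simp [hg, Finset.range_add_one, Finset.filter_insert, hn]
        rw [heq] at hl
        exact ih l hl
  set R'' : W → ℕ∞ := fun w =>
    if hw : ∃ k : ℕ, R w = ⊤ ∧ E' w = Rk.inf (k : ℕ∞) then (g hw.choose : ℕ∞)
    else ⊤ with hR''def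
  have hR''top : ∀ w : W, (¬ ∃ k : ℕ, R w = ⊤ ∧ E' w = Rk.inf (k : ℕ∞)) →
      R'' w = ⊤ := by
    intro w hw; simp only [hR''def, dif_neg hw]
  have hR''spec : ∀ w : W, ∀ k : ℕ, R w = ⊤ → E' w = Rk.inf (k : ℕ∞) →
      R'' w = (g k : ℕ∞) := by
    intro w k h1 h2
    have hw : ∃ k : ℕ, R w = ⊤ ∧ E' w = Rk.inf (k : ℕ∞) := ⟨k, h1, h2⟩
    have hspec := hw.choose_spec
    have hk : hw.choose = k := by
      have := hspec.2.symm.trans h2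
      exact_mod_cast Rk.inf.inj this
    simp only [hR''def, dif_pos hw, hk]
  have hmodel : RankedModel R'' (infForm KB R) := by
    constructor
    · intro w i hw j hj
      by_cases hex : ∃ k : ℕ, R w = ⊤ ∧ E' w = Rk.inf (k : ℕ∞)
      · obtain ⟨k, hk1, hk2⟩ := hex
        rw [hR''spec w k hk1 hk2] at hw
        have hgk : g k = i := by exact_mod_cast hw
        obtain ⟨k', hk', hgk'⟩ := gsurj k j (by omega)
        obtain ⟨w', hw1, hw2⟩ := hk'
        exact ⟨w', by rw [hR''spec w' k' hw1 hw2, hgk']⟩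
      · rw [hR''top w hex] at hw
        exact absurd hw.symm (by simp)
    · rintro p (⟨A, B, C, hABC, hC, rfl⟩ | hp)
      · intro u hu hmin
        obtain ⟨huAC, huf⟩ := hu
        by_cases hex : ∃ k : ℕ, R u = ⊤ ∧ E' u = Rk.inf (k : ℕ∞)
        swap
        · exact absurd (hR''top u hex) huf
        obtain ⟨k, hk1, hk2⟩ := hex
        have hsat := hE'.2 (A, B, C) hABC
        simp only [SatSC] at hsat
        have hCempty : ¬ (C ∩ UfE E').Nonempty := by
          rintro ⟨v, hvC, i, hvE⟩
          have hle : R v ≤ (i : ℕ∞) := by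
            have := hRfin v
            rwa [finPartE_fin hvE] at this
          have hv : v ∈ C ∩ UfR R :=
            ⟨hvC, by rw [mem_UfR]; intro h; rw [h] at hle; simp at hle⟩
          rw [hC] at hv
          exact hv
        rw [if_neg hCempty] at hsat
        apply hsat u ⟨huAC, k, hk2⟩
        intro v hv
        obtain ⟨hvAC, k', hvE⟩ := hv
        have hRv : R v = ⊤ := by
          by_contra h
          have : v ∈ C ∩ UfR R := ⟨hvAC.2, h⟩
          rw [hC] at this
          exact this
        have hminv := hmin v ⟨hvAC, by
          rw [mem_UfR, hR''spec v k' hRv hvE]; simp⟩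
        rw [hR''spec u k hk1 hk2, hR''spec v k' hRv hvE] at hminv
        have hgg : g k ≤ g k' := by exact_mod_cast hminv
        have hkk : k ≤ k' := by
          by_contra h
          push_neg at h
          have := gstrict ⟨v, hRv, hvE⟩ h
          omega
        rw [hk2, hvE, Rk.le_inf_iff]
        exact_mod_cast hkk
      · have hp' : p = ((UfR R : Set W), (∅ : Set W)) := hp
        subst hp'
        intro u hu hmin
        obtain ⟨hu1, hu2⟩ := hu
        by_cases hex : ∃ k : ℕ, R u = ⊤ ∧ E' u = Rk.inf (k : ℕ∞)
        · obtain ⟨k, hk1, _⟩ := hex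
          exact absurd hk1 hu1
        · exact absurd (hR''top u hex) hu2
  intro u k hu hEu
  have hle := hR'.2 R'' hmodel u
  rw [hR''spec u k hu hEu] at hle
  calc R' u ≤ (g k : ℕ∞) := hle
    _ ≤ (k : ℕ∞) := by exact_mod_cast gle k

/-- for a consistent SCKB `KB`, the constructed interpretation
`E_KB` is the unique minimal epistemic model of `KB`. -/
theorem constructed_interpretation_unique_minimal_model
    (KB : Set (Set W × Set W × Set W)) (hfin : KB.Finite)
    (hcons : ∃ E : W → Rk, EpiModel E KB ∧ {u : W | E u = Rk.fin 0}.Nonempty)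
    (R : W → ℕ∞) (hR : MinRankedModel R (conjForm KB))
    (R' : W → ℕ∞) (hR' : MinRankedModel R' (infForm KB R)) :
    EpiModel (minEpi R R') KB ∧
    (¬ ∃ E' : W → Rk, EpiModel E' KB ∧ epiLt E' (minEpi R R')) ∧
    (∀ E' : W → Rk, MinEpiModel E' KB → E' = minEpi R R') := by
  classical
  set E : W → Rk := minEpi R R' with hE
  have hdisj : ∀ u : W, R' u ≠ ⊤ → R u = ⊤ :=
    disj_lemma (Or.inr rfl) hR'.1
  -- Part I : E is an epistemic model of KB
  have hmodel : EpiModel E KB := by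
    constructor
    · constructor
      · intro u i hEu j hj
        by_cases hu : R u = ⊤
        · rw [hE, minEpi_inf hu] at hEu
          exact Rk.noConfusion hEu
        · rw [hE, minEpi_fin hu] at hEu
          have hi : (R u).toNat = i := Rk.fin.inj hEu
          have hRu : R u = (i : ℕ∞) := by
            rw [← hi]
            exact (ENat.coe_toNat hu).symm
          obtain ⟨u', hu'⟩ := hR.1.1 u i hRu j hj
          refine ⟨u', ?_⟩
          rw [hE, minEpi_fin (by rw [hu']; simp), hu']
          simp
      · intro u i hEu j hj
        by_cases hu : R u = ⊤
        · rw [hE, minEpi_inf hu] at hEu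
          have hRu : R' u = (i : ℕ∞) := Rk.inf.inj hEu
          obtain ⟨u', hu'⟩ := hR'.1.1 u i hRu j hj
          have hRu' : R u' = ⊤ := hdisj u' (by rw [hu']; simp)
          exact ⟨u', by rw [hE, minEpi_inf hRu', hu']⟩
        · rw [hE, minEpi_fin hu] at hEu
          exact Rk.noConfusion hEu
    · rintro ⟨A, B, C⟩ ht
      simp only [SatSC]
      by_cases hCf : (C ∩ UfE E).Nonempty
      · rw [if_pos hCf]
        intro u hu hmin
        obtain ⟨huAC, huf⟩ := hu
        have hRu : R u ≠ ⊤ := mem_ufe_minEpi.1 huf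
        apply hR.1.2 (A ∩ C, B) ⟨A, B, C, ht, rfl⟩ u ⟨huAC, hRu⟩
        intro v hv
        obtain ⟨hvAC, hvf⟩ := hv
        have hminv := hmin v ⟨hvAC, mem_ufe_minEpi.2 hvf⟩
        rw [hE, minEpi_fin hRu, minEpi_fin hvf, Rk.le_fin_iff] at hminv
        exact (toNat_le_iff_le hRu hvf).1 hminv
      · rw [if_neg hCf]
        have hCe : C ∩ UfR R = ∅ := by
          rw [Set.eq_empty_iff_forall_notMem]
          rintro v ⟨hvC, hvf⟩
          exact hCf ⟨v, hvC, mem_ufe_minEpi.2 hvf⟩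
        intro u hu hmin
        obtain ⟨huAC, huI⟩ := hu
        have hR'u : R' u ≠ ⊤ := (mem_uie_minEpi hdisj).1 huI
        apply hR'.1.2 (A ∩ C, B) (Or.inl ⟨A, B, C, ht, hCe, rfl⟩) u ⟨huAC, hR'u⟩
        intro v hv
        obtain ⟨hvAC, hvf⟩ := hv
        have hminv := hmin v ⟨hvAC, (mem_uie_minEpi hdisj).2 hvf⟩
        rw [hE, minEpi_inf (hdisj u hR'u), minEpi_inf (hdisj v hvf),
          Rk.le_inf_iff] at hminv
        exact hminv
  -- Part II : E is pointwise below every epistemic model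
  have hbelow : ∀ E₀ : W → Rk, EpiModel E₀ KB → epiLe E E₀ := by
    intro E₀ hE₀ u
    have hRfin : ∀ v : W, R v ≤ finPartE E₀ v :=
      fun v => hR.2 _ (finPart_model E₀ hE₀) v
    by_cases hu : R u = ⊤
    · rw [hE, minEpi_inf hu]
      rcases hE₀u : E₀ u with i | m
      · exfalso
        have := hRfin u
        rw [finPartE_fin hE₀u, hu] at this
        simp at this
      · rw [Rk.le_inf_iff]
        rcases eq_or_ne m ⊤ with rfl | hm
        · exact le_top
        · obtain ⟨k, hk⟩ := WithTop.ne_top_iff_exists.1 hm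
          rw [← hk]
          exact key_inf hR hR' hE₀ u k hu
            (by rw [hE₀u]; exact congrArg Rk.inf hk.symm)
    · rw [hE, minEpi_fin hu]
      rcases hE₀u : E₀ u with i | m
      · rw [Rk.le_fin_iff]
        have hle := hRfin u
        rw [finPartE_fin hE₀u] at hle
        have : (R u).toNat ≤ ((i : ℕ∞)).toNat :=
          (toNat_le_iff_le hu (by simp)).2 hle
        simpa using this
      · exact Rk.fin_le_inf
  refine ⟨hmodel, ?_, ?_⟩
  · rintro ⟨E', hE', hlt⟩
    exact hlt.2 (hbelow E' hE')
  · intro E' hminE'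
    have h1 : epiLe E E' := hbelow E' hminE'.1
    have h2 : epiLe E' E := by
      by_contra h2
      exact hminE'.2 ⟨E, hmodel, h1, h2⟩
    funext u
    exact Rk.le_antisymm' (h2 u) (h1 u)
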